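/- arXiv:2504.12758 — 3 statements merged into one kernel-verified Lean document; each statement's English description precedes it below -/
import Mathlib

section
/- Let s > 0 be a real number and let α ≥ 2 be an even natural number. Then the Rapp function g(y) = y / (1 + (y/s)^α) is bounded on ℝ: for every y ∈ ℝ, |g(y)| ≤ (s/α) · (α − 1)^(1 − 1/α). -/
/-!
With `t = |y| / s` the claim reads `t / (1 + t ^ α) ≤ (α - 1) ^ (1 - 1/α) / α`. Writing
`K = (α - 1) ^ (1 - 1/α)`, this is the weighted AM-GM inequality with weights `1/α`,
`(α - 1)/α` applied to `K t^α` and `K / (α - 1)`, whose weighted geometric mean is exactly `t`.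
-/

open Real

theorem mul_le_sub_one_rpow_mul_one_add_rpow {p t : ℝ} (hp : 1 < p) (ht : 0 ≤ t) :
    p * t ≤ (p - 1) ^ (1 - 1 / p) * (1 + t ^ p) := by
  have hp0 : 0 < p := by linarith
  have hp1 : 0 < p - 1 := by linarith
  set K := (p - 1) ^ (1 - 1 / p) with hK
  have hK0 : 0 < K := rpow_pos_of_pos hp1 _
  have hweights : 1 / p + (1 - 1 / p) = 1 := by ring
  have hamgm := geom_mean_le_arith_mean2_weighted (by positivity)
    (sub_nonneg.2 ((div_le_one hp0).2 hp.le)) (by positivity : 0 ≤ K * t ^ p)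
    (by positivity : 0 ≤ K / (p - 1)) hweights
  have hgeom : (K * t ^ p) ^ (1 / p) * (K / (p - 1)) ^ (1 - 1 / p) = t :=
    calc (K * t ^ p) ^ (1 / p) * (K / (p - 1)) ^ (1 - 1 / p)
        = K ^ (1 / p) * t * (K ^ (1 - 1 / p) / K) := by
          rw [mul_rpow hK0.le (by positivity), ← rpow_mul ht, mul_one_div_cancel hp0.ne',
            rpow_one, div_rpow hK0.le hp1.le, ← hK]
      _ = K ^ (1 / p + (1 - 1 / p)) * t / K := by rw [rpow_add hK0]; ring
      _ = t := by rw [hweights, rpow_one, mul_div_cancel_left₀ _ hK0.ne']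
  have harith : 1 / p * (K * t ^ p) + (1 - 1 / p) * (K / (p - 1)) = K * (1 + t ^ p) / p := by
    field_simp
    ring
  rw [hgeom, harith, le_div_iff₀ hp0] at hamgm
  linarith

theorem div_one_add_rpow_le {p t : ℝ} (hp : 1 < p) (ht : 0 ≤ t) :
    t / (1 + t ^ p) ≤ (p - 1) ^ (1 - 1 / p) / p := by
  have hp0 : 0 < p := by linarith
  rw [div_le_div_iff₀ (by positivity) hp0, mul_comm t]
  exact mul_le_sub_one_rpow_mul_one_add_rpow hp ht

/-- For `s > 0` and even `α ≥ 2`, the Rapp function `g(y) = y / (1 + (y/s)^α)` is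
bounded on `ℝ`: `|g(y)| ≤ (s/α) (α-1)^(1-1/α)` for every real `y`. -/
theorem rapp_bounded (s : ℝ) (hs : 0 < s) (α : ℕ) (hα : 2 ≤ α) (hαe : Even α) :
    ∀ y : ℝ, |y / (1 + (y / s) ^ α)|
      ≤ (s / (α : ℝ)) * ((α : ℝ) - 1) ^ (1 - 1 / (α : ℝ)) := by
  intro y
  have hpow : (y / s) ^ α = (|y| / s) ^ α := by rw [div_pow, div_pow, hαe.pow_abs]
  have hbound := div_one_add_rpow_le (p := α) (by exact_mod_cast hα) (by positivity : 0 ≤ |y| / s)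
  rw [rpow_natCast] at hbound
  calc |y / (1 + (y / s) ^ α)| = s * (|y| / s / (1 + (|y| / s) ^ α)) := by
        rw [hpow, abs_div, abs_of_pos (by positivity : 0 < 1 + (|y| / s) ^ α)]
        field_simp
    _ ≤ s * (((α : ℝ) - 1) ^ (1 - 1 / (α : ℝ)) / α) := by gcongr
    _ = s / α * ((α : ℝ) - 1) ^ (1 - 1 / (α : ℝ)) := by ring
end

section
/- Let s > 0 be a real number and let α ≥ 2 be an even natural number. Then the Rapp function g(y) = y / (1 + (y/s)^α) is strictly increasing on the interval [0, s · (α − 1)^(−1/α)]. -/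
/-- For `s > 0` and even `α ≥ 2`, the Rapp function `g(y) = y / (1 + (y/s)^α)` is
strictly increasing on the interval `[0, s (α-1)^(-1/α)]`. -/
theorem rapp_strictMonoOn (s : ℝ) (hs : 0 < s) (α : ℕ) (hα : 2 ≤ α) (hαe : Even α) :
    StrictMonoOn (fun y : ℝ => y / (1 + (y / s) ^ α))
      (Set.Icc 0 (s * ((α : ℝ) - 1) ^ (-(1 : ℝ) / (α : ℝ)))) := by
  have h2 : (2:ℝ) ≤ (α:ℝ) := by exact_mod_cast hα
  have hαpos : (0:ℝ) < (α:ℝ) - 1 := by linarith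
  set c : ℝ := ((α : ℝ) - 1) ^ (-(1 : ℝ) / (α : ℝ)) with hc
  have hcpos : 0 < c := Real.rpow_pos_of_pos hαpos _
  have hden : ∀ y : ℝ, 0 < 1 + (y / s) ^ α := by
    intro y
    have := hαe.pow_nonneg (y / s)
    linarith
  have hderiv : ∀ y : ℝ, HasDerivAt (fun y : ℝ => y / (1 + (y / s) ^ α))
      ((1 * (1 + (y / s) ^ α) - y * ((α:ℝ) * (y / s) ^ (α - 1) * (1 / s))) /
        (1 + (y / s) ^ α) ^ 2) y := by
    intro y
    have h1 : HasDerivAt (fun y : ℝ => y / s) (1 / s) y := by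
      simpa using (hasDerivAt_id y).div_const s
    have hd2 : HasDerivAt (fun y : ℝ => 1 + (y / s) ^ α)
        ((α:ℝ) * (y / s) ^ (α - 1) * (1 / s)) y := by
      simpa using (h1.pow α).const_add 1
    exact (hasDerivAt_id y).div hd2 (hden y).ne'
  apply strictMonoOn_of_deriv_pos (convex_Icc _ _)
  · exact Continuous.continuousOn
      (continuous_id.div (by continuity) fun y => (hden y).ne')
  · intro x hx
    rw [interior_Icc] at hx
    obtain ⟨hx0, hx1⟩ := hx
    rw [(hderiv x).deriv]
    apply div_pos
    · have hxs : 0 < x / s := div_pos hx0 hs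
      have hxc : x / s < c := by
        rw [div_lt_iff₀ hs]
        linarith [hx1, mul_comm c s]
      have hpow : (x / s) ^ α < c ^ α := pow_lt_pow_left₀ hxc hxs.le (by omega)
      have hcα : c ^ α = ((α:ℝ) - 1)⁻¹ := by
        rw [hc, ← Real.rpow_natCast (((α : ℝ) - 1) ^ (-(1 : ℝ) / (α : ℝ))) α,
          ← Real.rpow_mul hαpos.le]
        rw [div_mul_cancel₀]
        · simp [Real.rpow_neg_one]
        · positivity
      have hnum : ((α:ℝ) - 1) * (x / s) ^ α < 1 := by
        have := (mul_lt_mul_iff_right₀ hαpos).mpr (hpow.trans_eq hcα)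
        rwa [mul_inv_cancel₀ hαpos.ne'] at this
      have hpm : (x / s) ^ (α - 1) * (x / s) = (x / s) ^ α := by
        rw [← pow_succ]
        congr 1
        omega
      have hsplit : x * ((α:ℝ) * (x / s) ^ (α - 1) * (1 / s))
          = (α:ℝ) * (x / s) ^ α := by
        rw [← hpm]
        field_simp
      rw [hsplit]
      nlinarith [hden x]
    · positivity
end

section
/- Let s > 0, let α ≥ 2 be an even natural number, let g(y) = y / (1 + (y/s)^α) be the Rapp function, let d ≥ 1, and let x⁽¹⁾, …, x⁽ᴰ⁾ ∈ ℝ^d be D pairwise distinct observation vectors with augmented vectors x̃⁽ⁱ⁾ = (x⁽ⁱ⁾₁, …, x⁽ⁱ⁾_d, 1) ∈ ℝ^{d+1}. Let the random matrix H ∈ ℝ^{D × (d+1)} have independent standard Gaussian entries (i.e., H is distributed according to the product of D·(d+1) copies of the standard Gaussian measure on ℝ). Then for almost every realization of H, the D × D hidden-layer output matrix G with entries G_{i,j} = g(⟨H_{j,·}, x̃⁽ⁱ⁾⟩) (where H_{j,·} denotes the j-th row of H and ⟨·,·⟩ the Euclidean inner product on ℝ^{d+1}) is invertible; consequently, for almost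 every H, for every target vector t ∈ ℝ^D there exists a weight vector w ∈ ℝ^D with G·w = t. -/
/-!
The determinant of `G` is a real-analytic function of `H`, and zero sets of real-analytic
functions that are not identically zero are null for the standard Gaussian measure and, by
Fubini, for its finite products. It therefore suffices to find a single `H` with `det G ≠ 0`,
and such an `H` exists as soon as the `D` functions `h ↦ g(⟨h, x̃⁽ⁱ⁾⟩)` on `ℝ^{d+1}` are
linearly independent. Since the `x̃⁽ⁱ⁾` are distinct and their last coordinates equal `1`, they
are nonzero and pairwise not opposite, so some direction `v` gives values `cᵢ = ⟨v, x̃⁽ⁱ⁾⟩`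
that are nonzero with distinct moduli. On the line `t • v` the functions become
`t ↦ t cᵢ / (1 + aᵢ t^α)` with distinct `aᵢ = (cᵢ / s)^α > 0`; after substituting `u = t^α`,
a vanishing combination `∑ bᵢ / (1 + aᵢ u)` is ruled out by clearing denominators and
evaluating the resulting polynomial at the poles `u = -1/aᵢ`.
-/

open MeasureTheory ProbabilityTheory Set

section AnalyticZeros

variable {E F : Type*} [NormedAddCommGroup E] [NormedSpace ℝ E] [MeasurableSpace E]
  [NormedAddCommGroup F] [NormedSpace ℝ F] [MeasurableSpace F]

def AnalyticZerosNull (μ : Measure E) : Prop :=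
  ∀ f : E → ℝ, AnalyticOnNhd ℝ f univ → f ≠ 0 → ∀ᵐ x ∂μ, f x ≠ 0

theorem analyticZerosNull_of_nullSingletonClass (μ : Measure ℝ) [NullSingletonClass μ] :
    AnalyticZerosNull μ := by
  intro f hf hf0
  -- the zeros of `f` form a discrete, hence countable, set
  have hcod := (hf.eqOn_zero_or_eventually_ne_zero_of_preconnected isPreconnected_univ).resolve_left
    fun h ↦ hf0 (funext fun x ↦ h (mem_univ x))
  have := ae_restrict_le_codiscreteWithin (μ := μ) MeasurableSet.univ hcod
  rwa [Measure.restrict_univ] at this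

theorem AnalyticZerosNull.prod [SecondCountableTopology E] [SecondCountableTopology F]
    [BorelSpace E] [BorelSpace F] {μ : Measure E} {ν : Measure F} [SFinite μ] [SFinite ν]
    (hμ : AnalyticZerosNull μ) (hν : AnalyticZerosNull ν) : AnalyticZerosNull (μ.prod ν) := by
  intro f hf hf0
  obtain ⟨⟨x₀, y₀⟩, hf₀⟩ := Function.ne_iff.mp hf0
  have hmeas : MeasurableSet {p | f p ≠ 0} :=
    (isOpen_ne_fun hf.continuous continuous_const).measurableSet
  rw [Measure.ae_prod_iff_ae_ae hmeas]
  have hslice : ∀ᵐ x ∂μ, f (x, y₀) ≠ 0 :=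
    hμ _ (hf.comp (analyticOnNhd_id.prod analyticOnNhd_const) fun _ _ ↦ mem_univ _)
      (Function.ne_iff.mpr ⟨x₀, hf₀⟩)
  filter_upwards [hslice] with x hx
  exact hν _ (hf.comp (analyticOnNhd_const.prod analyticOnNhd_id) fun _ _ ↦ mem_univ _)
    (Function.ne_iff.mpr ⟨y₀, hx⟩)

theorem AnalyticZerosNull.pi [SecondCountableTopology E] [BorelSpace E] {μ : Measure E}
    [SigmaFinite μ] (hμ : AnalyticZerosNull μ) (n : ℕ) :
    AnalyticZerosNull (Measure.pi fun _ : Fin n ↦ μ) := by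
  induction n with
  | zero =>
    intro f _ hf0
    obtain ⟨z, hz⟩ := Function.ne_iff.mp hf0
    exact .of_forall fun x ↦ Subsingleton.elim z x ▸ hz
  | succ n ih =>
    intro f hf hf0
    let cons := Fin.consEquivL ℝ fun _ : Fin (n + 1) ↦ E
    have hcons : ∀ᵐ p ∂μ.prod (Measure.pi fun _ : Fin n ↦ μ), f (cons p) ≠ 0 :=
      hμ.prod ih _ (hf.comp (cons.toContinuousLinearMap.analyticOnNhd univ) fun _ _ ↦ mem_univ _)
        fun h ↦ hf0 (funext fun x ↦ by simpa using congrFun h (cons.symm x))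
    filter_upwards [(measurePreserving_piFinSuccAbove (fun _ ↦ μ) 0).quasiMeasurePreserving.ae
      hcons] with x hx
    convert hx using 2
    ext i
    simp [cons, Fin.consEquivL_apply, Fin.cons_self_tail]

end AnalyticZeros

theorem AnalyticOnNhd.matrix_det {𝕜 E n : Type*} [NontriviallyNormedField 𝕜]
    [NormedAddCommGroup E] [NormedSpace 𝕜 E] [Fintype n] [DecidableEq n]
    {A : E → Matrix n n 𝕜} {s : Set E} (hA : ∀ i j, AnalyticOnNhd 𝕜 (fun x ↦ A x i j) s) :
    AnalyticOnNhd 𝕜 (fun x ↦ (A x).det) s := by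
  simp only [Matrix.det_apply']
  exact Finset.analyticOnNhd_fun_sum _ fun σ _ ↦
    analyticOnNhd_const.mul (Finset.analyticOnNhd_fun_prod _ fun i _ ↦ hA _ _)

theorem exists_det_ne_zero_of_linearIndependent {R X : Type*} [CommRing R] [Nontrivial R]
    {m : ℕ} {f : Fin m → X → R} (hf : LinearIndependent R f) :
    ∃ x : Fin m → X, (Matrix.of fun i j ↦ f i (x j)).det ≠ 0 := by
  induction m with
  | zero => exact ⟨Fin.elim0, by simp⟩
  | succ m ih =>
    obtain ⟨x, hx⟩ := ih (hf.comp Fin.castSucc (Fin.castSucc_injective m))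
    let cof : Fin (m + 1) → R := fun i ↦
      (-1) ^ (i + m : ℕ) * (Matrix.of fun r k ↦ f (i.succAbove r) (x k)).det
    have hexp : ∀ y, (Matrix.of fun i j ↦ f i (Fin.snoc x y j)).det = ∑ i, cof i * f i y := by
      intro y
      rw [Matrix.det_succ_column _ (Fin.last m)]
      refine Finset.sum_congr rfl fun i _ ↦ ?_
      have hminor : (Matrix.of fun i j ↦ f i (Fin.snoc (α := fun _ ↦ X) x y j)).submatrix
          i.succAbove (Fin.last m).succAbove = Matrix.of fun r k ↦ f (i.succAbove r) (x k) := by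
        ext; simp [Fin.succAbove_last]
      simp only [hminor, cof, Fin.snoc_last, Matrix.of_apply, Fin.val_last]
      ring
    have hlast : cof (Fin.last m) ≠ 0 := by
      simpa [cof, Fin.succAbove_last, ← two_mul] using hx
    obtain ⟨y, hy⟩ : ∃ y, ∑ i, cof i * f i y ≠ 0 := by
      by_contra! h
      exact hlast (Fintype.linearIndependent_iff.mp hf cof (funext fun y ↦ by simpa using h y) _)
    exact ⟨Fin.snoc x y, by rwa [hexp]⟩

theorem exists_dotProduct_ne_zero {ι K n : Type*} [Finite ι] [Field K] [Infinite K] [Fintype n]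
    {a : ι → n → K} (ha : ∀ i, a i ≠ 0) : ∃ v : n → K, ∀ i, v ⬝ᵥ a i ≠ 0 := by
  classical
  obtain ⟨f, hf⟩ := Module.exists_dual_forall_apply_ne_zero (K := K) a ha
  obtain ⟨v, rfl⟩ := (dotProductEquiv K n).surjective f
  exact ⟨v, hf⟩

open Polynomial in
theorem linearIndependent_inv_one_add_mul {ι : Type*} [Fintype ι] {a : ι → ℝ}
    (ha : Function.Injective a) (ha0 : ∀ i, 0 < a i) :
    LinearIndependent ℝ fun i (u : Ioi (0 : ℝ)) ↦ (1 + a i * u)⁻¹ := by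
  classical
  rw [Fintype.linearIndependent_iff]
  intro b hb i
  have hfac : ∀ j, ∀ u : ℝ, 0 < u → 1 + a j * u ≠ 0 := fun j u hu ↦ by
    have := ha0 j; positivity
  set P : ℝ[X] := ∑ j, C (b j) * ∏ k ∈ Finset.univ.erase j, (1 + C (a k) * X)
  have hP : P = 0 := by
    refine P.eq_zero_of_infinite_isRoot ((Ioi_infinite 0).mono fun u (hu : 0 < u) ↦ ?_)
    have hsum : ∑ j, b j * (1 + a j * u)⁻¹ = 0 := by
      simpa using congrFun hb ⟨u, hu⟩
    have hprod : ∀ j, ∏ k ∈ Finset.univ.erase j, (1 + a k * u)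
        = (1 + a j * u)⁻¹ * ∏ k, (1 + a k * u) := fun j ↦ by
      rw [← Finset.mul_prod_erase _ _ (Finset.mem_univ j), inv_mul_cancel_left₀ (hfac j u hu)]
    simp [P, eval_finsetSum, eval_prod, hprod, ← mul_assoc, ← Finset.sum_mul, hsum]
  -- at the pole of the `i`-th fraction only the `i`-th summand of `P` survives
  have hpole : 1 + a i * -(a i)⁻¹ = 0 := by field_simp [(ha0 i).ne']; ring
  have heval := congrArg (eval (-(a i)⁻¹)) hP
  rw [eval_zero, eval_finsetSum, Finset.sum_eq_single i] at heval
  · simp only [eval_mul, eval_C, eval_prod, eval_add, eval_one, eval_X] at heval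
    refine (mul_eq_zero.mp heval).resolve_right (Finset.prod_ne_zero_iff.mpr fun k hk h ↦ ?_)
    apply Finset.ne_of_mem_erase hk (ha _)
    field_simp [(ha0 i).ne'] at h
    linarith
  · intro j _ hji
    simp only [eval_mul, eval_C, eval_prod, eval_add, eval_one, eval_X]
    rw [Finset.prod_eq_zero (Finset.mem_erase.mpr ⟨Ne.symm hji, Finset.mem_univ i⟩) hpole, mul_zero]
  · simp

noncomputable def rapp (s : ℝ) (α : ℕ) (y : ℝ) : ℝ := y / (1 + (y / s) ^ α)

theorem analyticOnNhd_rapp (s : ℝ) {α : ℕ} (hαe : Even α) : AnalyticOnNhd ℝ (rapp s α) univ :=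
  analyticOnNhd_id.div (analyticOnNhd_const.add (analyticOnNhd_id.div_const.pow α))
    fun y _ ↦ by have := hαe.pow_nonneg (y / s); positivity

theorem analyticOnNhd_rapp_dotProduct {m n : Type*} [Fintype m] [Fintype n] (s : ℝ) {α : ℕ}
    (hαe : Even α) (j : m) (u : n → ℝ) :
    AnalyticOnNhd ℝ (fun H : m → n → ℝ ↦ rapp s α (H j ⬝ᵥ u)) univ := by
  have hlin : AnalyticOnNhd ℝ (fun H : m → n → ℝ ↦ H j ⬝ᵥ u) univ :=
    (LinearMap.toContinuousLinearMap
      ((dotProductBilin ℝ ℝ).flip u ∘ₗ LinearMap.proj (φ := fun _ ↦ n → ℝ) j)).analyticOnNhd univ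
  exact (analyticOnNhd_rapp s hαe).comp hlin fun _ _ ↦ mem_univ _

theorem linearIndependent_rapp_mul {ι : Type*} [Fintype ι] {s : ℝ} (hs : s ≠ 0) {α : ℕ}
    (hα : α ≠ 0) (hαe : Even α) {c : ι → ℝ} (hc0 : ∀ i, c i ≠ 0)
    (hc : Function.Injective fun i ↦ c i ^ α) :
    LinearIndependent ℝ fun i (t : ℝ) ↦ rapp s α (t * c i) := by
  rw [Fintype.linearIndependent_iff]
  intro b hb i
  set a : ι → ℝ := fun j ↦ (c j / s) ^ α
  have ha : Function.Injective a := fun j k h ↦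
    hc (by simpa [a, div_pow, div_left_inj' (pow_ne_zero α hs)] using h)
  have ha0 : ∀ j, 0 < a j := fun j ↦ hαe.pow_pos (div_ne_zero (hc0 j) hs)
  -- substituting `u = t ^ α` turns `rapp s α (t * c j)` into `t * c j * (1 + a j * u)⁻¹`
  have hb' : ∑ j, (b j * c j) • (fun u : Ioi (0 : ℝ) ↦ (1 + a j * u)⁻¹) = 0 := by
    ext ⟨u, hu⟩
    set t := u ^ (α⁻¹ : ℝ)
    have ht : 0 < t := Real.rpow_pos_of_pos hu _
    have htu : t ^ α = u := Real.rpow_inv_natCast_pow hu.le hα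
    have hrapp : ∀ j, rapp s α (t * c j) = t * (c j * (1 + a j * u)⁻¹) := fun j ↦ by
      simp only [rapp, a, ← htu, mul_div_assoc, mul_pow, mul_comm (t ^ α)]
      ring
    have := congrFun hb t
    simp only [Finset.sum_apply, Pi.smul_apply, smul_eq_mul, hrapp, Pi.zero_apply] at this
    simpa [mul_left_comm _ t, ← Finset.mul_sum, ht.ne', mul_assoc] using this
  have := Fintype.linearIndependent_iff.mp (linearIndependent_inv_one_add_mul ha ha0) _ hb' i
  exact (mul_eq_zero.mp this).resolve_right (hc0 i)

theorem linearIndependent_rapp_dotProduct {ι n : Type*} [Fintype ι] [Fintype n] {s : ℝ}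
    (hs : s ≠ 0) {α : ℕ} (hα : α ≠ 0) (hαe : Even α) {u : ι → n → ℝ}
    (hu : Function.Injective u) (hneg : ∀ i j, u i ≠ -u j) :
    LinearIndependent ℝ fun i (h : n → ℝ) ↦ rapp s α (h ⬝ᵥ u i) := by
  obtain ⟨v, hv⟩ := exists_dotProduct_ne_zero
    (a := Sum.elim (fun p : {p : ι × ι // p.1 ≠ p.2} ↦ u p.1.1 - u p.1.2)
      fun p : ι × ι ↦ u p.1 + u p.2) <| by
    rintro (⟨⟨i, j⟩, hij⟩ | ⟨i, j⟩)
    · exact sub_ne_zero.mpr (hu.ne hij)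
    · exact fun h ↦ hneg i j (eq_neg_of_add_eq_zero_left h)
  have hsub : ∀ i j, i ≠ j → v ⬝ᵥ u i ≠ v ⬝ᵥ u j := fun i j hij h ↦
    hv (.inl ⟨(i, j), hij⟩) (by simp [dotProduct_sub, h])
  have hadd : ∀ i j, v ⬝ᵥ u i ≠ -(v ⬝ᵥ u j) := fun i j h ↦
    hv (.inr (i, j)) (by simp [dotProduct_add, h])
  have hc0 : ∀ i, v ⬝ᵥ u i ≠ 0 := fun i h ↦ hadd i i (by simp [h])
  have hc : Function.Injective fun i ↦ (v ⬝ᵥ u i) ^ α := by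
    intro i j h
    by_contra hij
    rcases (pow_eq_pow_iff_of_ne_zero hα).mp h with h | ⟨h, -⟩
    exacts [hsub i j hij h, hadd i j h]
  refine .of_comp (LinearMap.funLeft ℝ ℝ fun t : ℝ ↦ t • v) ?_
  convert linearIndependent_rapp_mul hs hα hαe hc0 hc using 1
  ext i t
  simp [dotProduct_comm _ (u i)]

theorem elm_hidden_matrix_invertible_general (s : ℝ) (hs : 0 < s) (α : ℕ) (hα : 2 ≤ α)
    (hαe : Even α) (d D : ℕ)
    (x : Fin D → Fin d → ℝ) (hx : Function.Injective x) :
    ∀ᵐ H : Fin D → Fin (d + 1) → ℝ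
      ∂(Measure.pi fun _ : Fin D => Measure.pi fun _ : Fin (d + 1) => gaussianReal 0 1),
      IsUnit (Matrix.of fun i j : Fin D =>
          (∑ k, H j k * (Fin.snoc (x i) 1 : Fin (d + 1) → ℝ) k)
            / (1 + ((∑ k, H j k * (Fin.snoc (x i) 1 : Fin (d + 1) → ℝ) k) / s) ^ α))
      ∧ ∀ t : Fin D → ℝ, ∃ w : Fin D → ℝ, ∀ i : Fin D,
          ∑ j, ((∑ k, H j k * (Fin.snoc (x i) 1 : Fin (d + 1) → ℝ) k)
            / (1 + ((∑ k, H j k * (Fin.snoc (x i) 1 : Fin (d + 1) → ℝ) k) / s) ^ α)) * w j = t i := by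
  let u : Fin D → Fin (d + 1) → ℝ := fun i ↦ Fin.snoc (x i) 1
  have hu : Function.Injective u := fun i j h ↦
    hx (funext fun k ↦ by simpa [u] using congrFun h k.castSucc)
  have hneg : ∀ i j, u i ≠ -u j := fun i j h ↦ by
    have := congrFun h (Fin.last d)
    norm_num [u] at this
  obtain ⟨H₀, hH₀⟩ := exists_det_ne_zero_of_linearIndependent
    (linearIndependent_rapp_dotProduct hs.ne' (by omega) hαe hu hneg)
  have := nullSingletonClass_gaussianReal (μ := 0) one_ne_zero
  have hdet : ∀ᵐ H ∂(Measure.pi fun _ : Fin D => Measure.pi fun _ : Fin (d + 1) =>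
      gaussianReal 0 1), (Matrix.of fun i j ↦ rapp s α (H j ⬝ᵥ u i)).det ≠ 0 :=
    ((analyticZerosNull_of_nullSingletonClass _).pi _).pi _ _
      (AnalyticOnNhd.matrix_det fun i j ↦ analyticOnNhd_rapp_dotProduct s hαe j (u i))
      fun h ↦ hH₀ (congrFun h H₀)
  filter_upwards [hdet] with H hH
  have hG : IsUnit (Matrix.of fun i j ↦ rapp s α (H j ⬝ᵥ u i)) :=
    (Matrix.isUnit_iff_isUnit_det _).mpr hH.isUnit
  refine ⟨hG, fun t ↦ ?_⟩
  obtain ⟨w, hw⟩ := Matrix.mulVec_surjective_iff_isUnit.mpr hG t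
  exact ⟨w, congrFun hw⟩

/-- For the Rapp activation (`s > 0`, even `α ≥ 2`) and `D` pairwise distinct
observation vectors in `ℝ^d` (`d ≥ 1`) with augmented vectors `x̃⁽ⁱ⁾ = (x⁽ⁱ⁾, 1)`,
for almost every random hidden-weight matrix `H ∈ ℝ^{D×(d+1)}` with i.i.d. standard
Gaussian entries, the `D × D` hidden-layer output matrix
`G_{i,j} = g(⟨H_{j,·}, x̃⁽ⁱ⁾⟩)` is invertible; consequently, for every target vector
`t ∈ ℝ^D` there is a weight vector `w` with `G w = t`. -/
theorem elm_hidden_matrix_invertible (s : ℝ) (hs : 0 < s) (α : ℕ) (hα : 2 ≤ α)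
    (hαe : Even α) (d D : ℕ) (hd : 1 ≤ d)
    (x : Fin D → Fin d → ℝ) (hx : Function.Injective x) :
    ∀ᵐ H : Fin D → Fin (d + 1) → ℝ
      ∂(Measure.pi fun _ : Fin D => Measure.pi fun _ : Fin (d + 1) => gaussianReal 0 1),
      IsUnit (Matrix.of fun i j : Fin D =>
          (∑ k, H j k * (Fin.snoc (x i) 1 : Fin (d + 1) → ℝ) k)
            / (1 + ((∑ k, H j k * (Fin.snoc (x i) 1 : Fin (d + 1) → ℝ) k) / s) ^ α))
      ∧ ∀ t : Fin D → ℝ, ∃ w : Fin D → ℝ, ∀ i : Fin D,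
          ∑ j, ((∑ k, H j k * (Fin.snoc (x i) 1 : Fin (d + 1) → ℝ) k)
            / (1 + ((∑ k, H j k * (Fin.snoc (x i) 1 : Fin (d + 1) → ℝ) k) / s) ^ α)) * w j = t i :=
  elm_hidden_matrix_invertible_general s hs α hα hαe d D x hx
end
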